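/- arXiv:1210.4127 — 6 statements merged into one kernel-verified Lean document; each statement's English description precedes it below -/
import Mathlib

section
/- The polynomial x² - 4/3 is irreducible over ℚ, but its second iterate (x² - 4/3)² - 4/3 factors as (x² - 2x + 2/3)(x² + 2x + 2/3) over ℚ. -/
open Polynomial

theorem irreducible_X_sq_sub_C_iff {K : Type*} [Field K] {a : K} :
    Irreducible (X ^ 2 - C a) ↔ ¬IsSquare a := by
  rw [X_pow_sub_C_irreducible_iff_of_prime Nat.prime_two, isSquare_iff_exists_sq]
  grind

-- The two sides differ by the constant `3 * C a - 4`.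
theorem comp_self_X_sq_sub_C_eq_mul {R : Type*} [CommRing R] {a : R} (ha : 3 * a = 4) :
    (X ^ 2 - C a).comp (X ^ 2 - C a) =
      (X ^ 2 - 2 * X + C (2 - a)) * (X ^ 2 + 2 * X + C (2 - a)) := by
  have hC : 3 * C a = 4 := by simpa only [C_mul, map_ofNat] using congrArg C ha
  simp only [sub_comp, pow_comp, X_comp, C_comp, C_sub, C_ofNat]
  linear_combination hC

theorem stmt_1 :
    Irreducible (X ^ 2 - C (4 / 3 : ℚ)) ∧
    (X ^ 2 - C (4 / 3 : ℚ)).comp (X ^ 2 - C (4 / 3 : ℚ)) =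
      (X ^ 2 - 2 * X + C (2 / 3 : ℚ)) * (X ^ 2 + 2 * X + C (2 / 3 : ℚ)) := by
  refine ⟨irreducible_X_sq_sub_C_iff.mpr (by norm_num), ?_⟩
  rw [comp_self_X_sq_sub_C_eq_mul (by norm_num)]
  norm_num
end

section
/- For every field K of characteristic 0 and every m ∈ K, the polynomial ((x - 1/4)² + m + 1/4)∘((x - 1/4)² + m + 1/4) factors as (x² - (3/2)x + (m + 13/16))(x² + (1/2)x + (m + 5/16)). In particular the second iterate of g_{1/4,m} is reducible over K for all m. -/
open Polynomial

theorem stmt_2 (K : Type*) [Field K] [CharZero K] (m : K) :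
    ((X - C (1 / 4 : K)) ^ 2 + C m + C (1 / 4 : K)).comp
        ((X - C (1 / 4 : K)) ^ 2 + C m + C (1 / 4 : K)) =
      (X ^ 2 - C (3 / 2 : K) * X + C (m + 13 / 16)) *
        (X ^ 2 + C (1 / 2 : K) * X + C (m + 5 / 16)) ∧
    ¬ Irreducible (((X - C (1 / 4 : K)) ^ 2 + C m + C (1 / 4 : K)).comp
        ((X - C (1 / 4 : K)) ^ 2 + C m + C (1 / 4 : K))) := by
  set c : K[X] := C (1 / 4 : K) with hcdef
  have hc : (4 : K[X]) * c = 1 := by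
    rw [hcdef, show ((4 : K[X]) = C (4 : K)) from (map_ofNat C _).symm, ← C_mul]
    norm_num
  have h32 : C (3 / 2 : K) = 6 * c := by
    rw [hcdef, show ((6 : K[X]) = C (6 : K)) from (map_ofNat C _).symm, ← C_mul]; norm_num
  have h12 : C (1 / 2 : K) = 2 * c := by
    rw [hcdef, show ((2 : K[X]) = C (2 : K)) from (map_ofNat C _).symm, ← C_mul]; norm_num
  have h13 : C (m + 13 / 16 : K) = C m + 13 * c ^ 2 := by
    rw [hcdef, show ((13 : K[X]) = C (13 : K)) from (map_ofNat C _).symm, ← C_pow, ← C_mul, ← C_add]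
    norm_num
  have h5 : C (m + 5 / 16 : K) = C m + 5 * c ^ 2 := by
    rw [hcdef, show ((5 : K[X]) = C (5 : K)) from (map_ofNat C _).symm, ← C_pow, ← C_mul, ← C_add]
    norm_num
  have hfac : ((X - C (1 / 4 : K)) ^ 2 + C m + C (1 / 4 : K)).comp
        ((X - C (1 / 4 : K)) ^ 2 + C m + C (1 / 4 : K)) =
      (X ^ 2 - C (3 / 2 : K) * X + C (m + 13 / 16)) *
        (X ^ 2 + C (1 / 2 : K) * X + C (m + 5 / 16)) := by
    simp only [add_comp, sub_comp, pow_comp, X_comp, C_comp]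
    rw [h32, h12, h13, h5]
    linear_combination (-16 * c ^ 3 - 4 * c ^ 2 - c - 4 * c * C m - C m) * hc
  have hd1 : (X ^ 2 - C (3 / 2 : K) * X + C (m + 13 / 16)).natDegree = 2 := by
    compute_degree!
  have hd2 : (X ^ 2 + C (1 / 2 : K) * X + C (m + 5 / 16)).natDegree = 2 := by
    compute_degree!
  refine ⟨hfac, fun h => ?_⟩
  rcases h.isUnit_or_isUnit hfac with hu | hu
  · exact (Polynomial.not_isUnit_of_natDegree_pos _ (by omega)) hu
  · exact (Polynomial.not_isUnit_of_natDegree_pos _ (by omega)) hu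
end

section
/- The polynomial f(x) = x² - x - 1 is irreducible over ℚ, its second iterate f²(x) is irreducible over ℚ, but its third iterate satisfies f³(x) = (x⁴ - 3x³ + 4x - 1)(x⁴ - x³ - 3x² + x + 1), hence is reducible over ℚ. -/
open Polynomial

private lemma aux_h3 : (3 : (ZMod 3)[X]) = 0 := by
  rw [← map_ofNat (C : ZMod 3 →+* _) 3, show (3 : ZMod 3) = 0 from rfl, map_zero]

private lemma aux_two_ne_zero : (2 : (ZMod 3)[X]) ≠ 0 := by
  intro h
  rw [← map_ofNat (C : ZMod 3 →+* _) 2] at h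
  exact (by decide : (2 : ZMod 3) ≠ 0) (C_eq_zero.mp h)

private lemma aux_twoX_ne_zero : (2 * X + 1 : (ZMod 3)[X]) ≠ 0 := by
  intro h
  have := congrArg (fun p => p.coeff 0) h
  simp at this

private lemma aux_not_dvd {K : Type*} [Field K] {Q q s r : K[X]} {dq dr : ℕ}
    (heq : Q = q * s + r) (hr0 : r ≠ 0) (hq : q.natDegree = dq)
    (hr : r.natDegree ≤ dr) (hlt : dr < dq) : ¬ q ∣ Q := by
  intro h
  have h1 : q ∣ r := (dvd_add_right (Dvd.intro s rfl)).mp (heq ▸ h)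
  have h2 := natDegree_le_of_dvd h1 hr0
  omega

private lemma aux_quad_eq {p : (ZMod 3)[X]} (hm : p.Monic) (hd : p.natDegree = 2) :
    p = X ^ 2 + C (p.coeff 1) * X + C (p.coeff 0) := by
  have h2 : p.coeff 2 = 1 := by rw [← hd]; exact hm.coeff_natDegree
  conv_lhs => rw [p.as_sum_range' 3 (by omega)]
  rw [Finset.sum_range_succ, Finset.sum_range_succ, Finset.sum_range_one, h2]
  simp only [← C_mul_X_pow_eq_monomial, map_one]
  ring

private lemma aux_cases3 : ∀ a : ZMod 3, a = 0 ∨ a = 1 ∨ a = 2 := by decide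

private lemma aux_irr_quad : Irreducible (X ^ 2 - X - 1 : (ZMod 3)[X]) := by
  have hQd : (X ^ 2 - X - 1 : (ZMod 3)[X]).natDegree = 2 := by compute_degree!
  rw [irreducible_iff_lt_natDegree_lt (ne_zero_of_natDegree_gt (n := 0) (by omega))
    (fun hu => by have := natDegree_eq_zero_of_isUnit hu; omega), hQd]
  intro q hq hmem
  rw [Finset.mem_Ioc] at hmem
  have h1 : q.natDegree = 1 := by omega
  rw [hq.eq_X_add_C h1]
  rcases aux_cases3 (q.coeff 0) with ha | ha | ha <;>
    rw [ha] <;> simp only [map_zero, map_one, map_ofNat]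
  · exact aux_not_dvd (dq := 1) (dr := 0) (s := X - 1) (r := 2)
      (by linear_combination (-1 : (ZMod 3)[X]) * aux_h3)
      aux_two_ne_zero (by compute_degree!) (by compute_degree) (by norm_num)
  · exact aux_not_dvd (dq := 1) (dr := 0) (s := X - 2) (r := 1) (by ring)
      one_ne_zero (by compute_degree!) (by compute_degree) (by norm_num)
  · exact aux_not_dvd (dq := 1) (dr := 0) (s := X - 3) (r := 2)
      (by linear_combination (1 : (ZMod 3)[X]) * aux_h3)
      aux_two_ne_zero (by compute_degree!) (by compute_degree) (by norm_num)

set_option maxHeartbeats 2000000 in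
private lemma aux_irr_quartic :
    Irreducible (X ^ 4 - 2 * X ^ 3 - 2 * X ^ 2 + 3 * X + 1 : (ZMod 3)[X]) := by
  have hQd : (X ^ 4 - 2 * X ^ 3 - 2 * X ^ 2 + 3 * X + 1 : (ZMod 3)[X]).natDegree = 4 := by
    compute_degree!
  rw [irreducible_iff_lt_natDegree_lt (ne_zero_of_natDegree_gt (n := 0) (by omega))
    (fun hu => by have := natDegree_eq_zero_of_isUnit hu; omega), hQd]
  intro q hq hmem
  rw [Finset.mem_Ioc] at hmem
  obtain h1 | h2 : q.natDegree = 1 ∨ q.natDegree = 2 := by omega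
  · rw [hq.eq_X_add_C h1]
    rcases aux_cases3 (q.coeff 0) with ha | ha | ha <;>
      rw [ha] <;> simp only [map_zero, map_one, map_ofNat]
    · exact aux_not_dvd (dq := 1) (dr := 0) (s := X^3 - 2*X^2 - 2*X + 3) (r := 1) (by ring)
        one_ne_zero (by compute_degree!) (by compute_degree) (by norm_num)
    · exact aux_not_dvd (dq := 1) (dr := 0) (s := X^3 - 3*X^2 + X + 2) (r := 2) (by linear_combination (-1 : (ZMod 3)[X]) * aux_h3)
        aux_two_ne_zero (by compute_degree!) (by compute_degree) (by norm_num)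
    · exact aux_not_dvd (dq := 1) (dr := 0) (s := X^3 - 4*X^2 + 6*X - 9) (r := 1) (by linear_combination (6 : (ZMod 3)[X]) * aux_h3)
        one_ne_zero (by compute_degree!) (by compute_degree) (by norm_num)
  · rw [aux_quad_eq hq h2]
    rcases aux_cases3 (q.coeff 1) with hb | hb | hb <;>
      rcases aux_cases3 (q.coeff 0) with hc | hc | hc <;>
        rw [hb, hc] <;> simp only [map_zero, map_one, map_ofNat]
    · exact aux_not_dvd (dq := 2) (dr := 0) (s := X^2 - 2*X - 2) (r := 1) (by linear_combination (X : (ZMod 3)[X]) * aux_h3)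
        one_ne_zero (by compute_degree!) (by compute_degree) (by norm_num)
    · exact aux_not_dvd (dq := 2) (dr := 1) (s := X^2 - 2*X - 3) (r := 2*X + 1) (by linear_combination (X + 1 : (ZMod 3)[X]) * aux_h3)
        aux_twoX_ne_zero (by compute_degree!) (by compute_degree) (by norm_num)
    · exact aux_not_dvd (dq := 2) (dr := 1) (s := X^2 - 2*X - 4) (r := X) (by linear_combination (2*X + 3 : (ZMod 3)[X]) * aux_h3)
        X_ne_zero (by compute_degree!) (by compute_degree) (by norm_num)
    · exact aux_not_dvd (dq := 2) (dr := 1) (s := X^2 - 3*X + 1) (r := 2*X + 1) (by ring)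
        aux_twoX_ne_zero (by compute_degree!) (by compute_degree) (by norm_num)
    · exact aux_not_dvd (dq := 2) (dr := 0) (s := X^2 - 3*X) (r := 1) (by linear_combination (2*X : (ZMod 3)[X]) * aux_h3)
        one_ne_zero (by compute_degree!) (by compute_degree) (by norm_num)
    · exact aux_not_dvd (dq := 2) (dr := 1) (s := X^2 - 3*X - 1) (r := X) (by linear_combination (3*X + 1 : (ZMod 3)[X]) * aux_h3)
        X_ne_zero (by compute_degree!) (by compute_degree) (by norm_num)
    · exact aux_not_dvd (dq := 2) (dr := 0) (s := X^2 - 4*X + 6) (r := 1) (by linear_combination (-3*X : (ZMod 3)[X]) * aux_h3)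
        one_ne_zero (by compute_degree!) (by compute_degree) (by norm_num)
    · exact aux_not_dvd (dq := 2) (dr := 0) (s := X^2 - 4*X + 5) (r := 2) (by linear_combination (-X - 2 : (ZMod 3)[X]) * aux_h3)
        aux_two_ne_zero (by compute_degree!) (by compute_degree) (by norm_num)
    · exact aux_not_dvd (dq := 2) (dr := 0) (s := X^2 - 4*X + 4) (r := 2) (by linear_combination (X - 3 : (ZMod 3)[X]) * aux_h3)
        aux_two_ne_zero (by compute_degree!) (by compute_degree) (by norm_num)

theorem stmt_3 (f : ℚ[X]) (hf : f = X ^ 2 - X - 1) :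
    Irreducible f ∧ Irreducible (f.comp f) ∧
    (f.comp f).comp f =
      (X ^ 4 - 3 * X ^ 3 + 4 * X - 1) * (X ^ 4 - X ^ 3 - 3 * X ^ 2 + X + 1) ∧
    ¬ Irreducible ((f.comp f).comp f) := by
  subst hf
  have hmon1 : Monic (X ^ 2 - X - 1 : ℤ[X]) := by monicity!
  have hmon2 : Monic (X ^ 4 - 2 * X ^ 3 - 2 * X ^ 2 + 3 * X + 1 : ℤ[X]) := by monicity!
  have hmapz1 : (X ^ 2 - X - 1 : ℤ[X]).map (Int.castRingHom (ZMod 3)) =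
      X ^ 2 - X - 1 := by
    simp [Polynomial.map_sub, Polynomial.map_pow]
  have hmapz2 : (X ^ 4 - 2 * X ^ 3 - 2 * X ^ 2 + 3 * X + 1 : ℤ[X]).map
      (Int.castRingHom (ZMod 3)) = X ^ 4 - 2 * X ^ 3 - 2 * X ^ 2 + 3 * X + 1 := by
    simp [Polynomial.map_sub, Polynomial.map_add, Polynomial.map_mul, Polynomial.map_pow,
      Polynomial.map_ofNat]
  have hirrz1 : Irreducible (X ^ 2 - X - 1 : ℤ[X]) :=
    hmon1.irreducible_of_irreducible_map (Int.castRingHom (ZMod 3)) _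
      (by rw [hmapz1]; exact aux_irr_quad)
  have hirrz2 : Irreducible (X ^ 4 - 2 * X ^ 3 - 2 * X ^ 2 + 3 * X + 1 : ℤ[X]) :=
    hmon2.irreducible_of_irreducible_map (Int.castRingHom (ZMod 3)) _
      (by rw [hmapz2]; exact aux_irr_quartic)
  have hmapq1 : (X ^ 2 - X - 1 : ℤ[X]).map (algebraMap ℤ ℚ) = X ^ 2 - X - 1 := by
    simp [Polynomial.map_sub, Polynomial.map_pow]
  have hmapq2 : (X ^ 4 - 2 * X ^ 3 - 2 * X ^ 2 + 3 * X + 1 : ℤ[X]).map (algebraMap ℤ ℚ) =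
      X ^ 4 - 2 * X ^ 3 - 2 * X ^ 2 + 3 * X + 1 := by
    simp [Polynomial.map_sub, Polynomial.map_add, Polynomial.map_mul, Polynomial.map_pow,
      Polynomial.map_ofNat]
  have hirr1 : Irreducible (X ^ 2 - X - 1 : ℚ[X]) := by
    have := (hmon1.irreducible_iff_irreducible_map_fraction_map (K := ℚ)).mp hirrz1
    rwa [hmapq1] at this
  have hcomp : (X ^ 2 - X - 1 : ℚ[X]).comp (X ^ 2 - X - 1) =
      X ^ 4 - 2 * X ^ 3 - 2 * X ^ 2 + 3 * X + 1 := by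
    simp only [sub_comp, pow_comp, X_comp, one_comp]
    ring
  have hirr2 : Irreducible ((X ^ 2 - X - 1 : ℚ[X]).comp (X ^ 2 - X - 1)) := by
    rw [hcomp]
    have := (hmon2.irreducible_iff_irreducible_map_fraction_map (K := ℚ)).mp hirrz2
    rwa [hmapq2] at this
  have hprod : ((X ^ 2 - X - 1 : ℚ[X]).comp (X ^ 2 - X - 1)).comp (X ^ 2 - X - 1) =
      (X ^ 4 - 3 * X ^ 3 + 4 * X - 1) * (X ^ 4 - X ^ 3 - 3 * X ^ 2 + X + 1) := by
    simp only [sub_comp, pow_comp, X_comp, one_comp, mul_comp, add_comp, comp_assoc]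
    ring
  refine ⟨hirr1, hirr2, hprod, ?_⟩
  rw [hprod]
  intro h
  have hd1 : (X ^ 4 - 3 * X ^ 3 + 4 * X - 1 : ℚ[X]).natDegree = 4 := by compute_degree!
  have hd2 : (X ^ 4 - X ^ 3 - 3 * X ^ 2 + X + 1 : ℚ[X]).natDegree = 4 := by compute_degree!
  rcases h.isUnit_or_isUnit rfl with hu | hu <;>
    · have := natDegree_eq_zero_of_isUnit hu
      omega
end

section
/- Let K be a number field, γ, m ∈ K, g(x) = (x-γ)² + m + γ, and n ≥ 1. Suppose gⁿ(x) is irreducible over K and g^{n+1}(x) = p₁(x)p₂(x) with p₁, p₂ ∈ K[x] nonconstant. If α is a root of p₁ in an algebraic closure of K, then 2γ - α is not a root of p₁. -/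
open Polynomial

noncomputable def gIter {K : Type*} [Field K] (g : K[X]) : ℕ → K[X]
  | 0 => Polynomial.X
  | n + 1 => g.comp (gIter g n)

/-!
Put `β = g(α)`. Since `g^{n+1} = gⁿ ∘ g` and `gⁿ` is irreducible, `gⁿ` is the minimal polynomial
of `β`, so every root of `g^{n+1}` has degree at least `2ⁿ`. Both factors have roots, hence
`deg p₁ = 2ⁿ`, `p₁` is a multiple of the minimal polynomial of `α`, and `K(α) = K(β)`, i.e.
`α = h(β)` for some `h ∈ K[x]`. A root `α' = 2γ - α` of `p₁` is then a conjugate of `α` with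
`g(α') = g(α)`; as `h(g(x)) - x` vanishes at `α`, it vanishes at `α'`, so `α' = h(β) = α`.
Then `α = γ ∈ K`, which contradicts `deg α = 2ⁿ ≥ 2`.
-/

open IntermediateField

section Iterate

variable {K : Type*} [Field K]

theorem gIter_succ' (g : K[X]) (n : ℕ) : gIter g (n + 1) = (gIter g n).comp g := by
  induction n with
  | zero => simp [gIter]
  | succ k ih => exact (congrArg g.comp ih).trans (comp_assoc g _ g).symm

theorem natDegree_gIter (g : K[X]) (n : ℕ) : (gIter g n).natDegree = g.natDegree ^ n := by
  induction n with
  | zero => simp [gIter]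
  | succ k ih => rw [gIter_succ', natDegree_comp, ih, pow_succ]

theorem Polynomial.Monic.gIter {g : K[X]} (hg : g.Monic) (hdeg : g.natDegree ≠ 0) (n : ℕ) :
    (gIter g n).Monic := by
  induction n with
  | zero => exact monic_X
  | succ k ih => rw [gIter_succ']; exact ih.comp hg hdeg

end Iterate

section Minpoly

variable {K L : Type*} [Field K] [Field L] [Algebra K L] {x : L}

theorem natDegree_minpoly_aeval_le (hx : IsIntegral K x) (p : K[X]) :
    (minpoly K (aeval x p)).natDegree ≤ (minpoly K x).natDegree := by
  have : FiniteDimensional K K⟮x⟯ := adjoin.finiteDimensional hx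
  calc (minpoly K (aeval x p)).natDegree
        = (minpoly K (aeval (AdjoinSimple.gen K x) p)).natDegree := by
          rw [← minpoly.algebraMap_eq (algebraMap K⟮x⟯ L).injective, ← aeval_algebraMap_apply]
          rfl
    _ ≤ Module.finrank K K⟮x⟯ := minpoly.natDegree_le _
    _ = (minpoly K x).natDegree := adjoin.finrank hx

theorem exists_aeval_aeval_eq_of_natDegree_minpoly_le (hx : IsIntegral K x) {p : K[X]}
    (hdeg : (minpoly K x).natDegree ≤ (minpoly K (aeval x p)).natDegree) :
    ∃ q : K[X], aeval (aeval x p) q = x := by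
  have hy : IsIntegral K (aeval x p) :=
    .of_mem_of_fg _ hx.fg_adjoin_singleton _ (aeval_mem_adjoin_singleton K x)
  have : FiniteDimensional K K⟮x⟯ := adjoin.finiteDimensional hx
  have hle : K⟮aeval x p⟯ ≤ K⟮x⟯ :=
    adjoin_simple_le_iff.2 (algebra_adjoin_le_adjoin K {x} (aeval_mem_adjoin_singleton K x))
  have heq : K⟮aeval x p⟯ = K⟮x⟯ :=
    eq_of_le_of_finrank_le hle (by rwa [adjoin.finrank hx, adjoin.finrank hy])
  have hmem : x ∈ Algebra.adjoin K {aeval x p} := by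
    rw [← adjoin_simple_toSubalgebra_of_isAlgebraic hy.isAlgebraic, heq]
    exact mem_adjoin_simple_self K x
  rwa [Algebra.adjoin_singleton_eq_range_aeval] at hmem

theorem eq_of_aeval_minpoly_eq_zero_of_aeval_eq {y : L} (hx : IsIntegral K x) {p : K[X]}
    (hdeg : (minpoly K x).natDegree ≤ (minpoly K (aeval x p)).natDegree)
    (hy : aeval y (minpoly K x) = 0) (hxy : aeval y p = aeval x p) : y = x := by
  obtain ⟨q, hq⟩ := exists_aeval_aeval_eq_of_natDegree_minpoly_le hx hdeg
  have hdvd : minpoly K x ∣ q.comp p - X := minpoly.dvd K x (by simp [aeval_comp, hq])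
  have := aeval_eq_zero_of_dvd_aeval_eq_zero hdvd hy
  rw [map_sub, aeval_comp, aeval_X, hxy, hq, sub_eq_zero] at this
  exact this.symm

theorem aeval_minpoly_eq_zero_of_natDegree_le {y : L} {p : K[X]} (hp : p ≠ 0)
    (hpx : aeval x p = 0) (hdeg : p.natDegree ≤ (minpoly K x).natDegree)
    (hpy : aeval y p = 0) : aeval y (minpoly K x) = 0 :=
  aeval_eq_zero_of_dvd_aeval_eq_zero
    (associated_of_dvd_of_natDegree_le (minpoly.dvd K x hpx) hp hdeg).symm.dvd hpy

end Minpoly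

section RootsOfIterate

variable {K L : Type*} [Field K] [Field L] [Algebra K L] {g : K[X]} {n : ℕ}

theorem minpoly_aeval_eq_gIter (hg : g.Monic) (hdeg : g.natDegree ≠ 0)
    (hirr : Irreducible (gIter g n)) {x : L} (hx : aeval x (gIter g (n + 1)) = 0) :
    minpoly K (aeval x g) = gIter g n := by
  rw [gIter_succ', aeval_comp] at hx
  exact (minpoly.eq_of_irreducible_of_monic hirr hx (hg.gIter hdeg n)).symm

theorem natDegree_pow_le_natDegree_minpoly (hg : g.Monic) (hdeg : g.natDegree ≠ 0)
    (hirr : Irreducible (gIter g n)) {x : L} (hx : aeval x (gIter g (n + 1)) = 0) :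
    g.natDegree ^ n ≤ (minpoly K x).natDegree := by
  calc g.natDegree ^ n = (minpoly K (aeval x g)).natDegree := by
        rw [minpoly_aeval_eq_gIter hg hdeg hirr hx, natDegree_gIter]
    _ ≤ (minpoly K x).natDegree := natDegree_minpoly_aeval_le ⟨_, hg.gIter hdeg _, hx⟩ g

theorem natDegree_le_of_gIter_succ_eq_mul (hg : g.Monic) (hg2 : g.natDegree = 2)
    (hirr : Irreducible (gIter g n)) {p₁ p₂ : K[X]} (hfac : gIter g (n + 1) = p₁ * p₂)
    {x : L} (hx : aeval x p₂ = 0) : p₁.natDegree ≤ 2 ^ n := by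
  have hdeg : g.natDegree ≠ 0 := by omega
  have hprod : p₁ * p₂ ≠ 0 := hfac ▸ (hg.gIter hdeg _).ne_zero
  have hp₂ : (minpoly K x).natDegree ≤ p₂.natDegree :=
    natDegree_le_of_dvd (minpoly.dvd K x hx) (right_ne_zero_of_mul hprod)
  have hx' : 2 ^ n ≤ (minpoly K x).natDegree := by
    rw [← hg2]
    exact natDegree_pow_le_natDegree_minpoly hg hdeg hirr (by rw [hfac, map_mul, hx, mul_zero])
  have hsum := congrArg natDegree hfac
  rw [natDegree_gIter, natDegree_mul (left_ne_zero_of_mul hprod) (right_ne_zero_of_mul hprod),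
    hg2, pow_succ] at hsum
  omega

end RootsOfIterate

theorem stmt_4_general (K : Type*) [Field K] [NumberField K] (γ m : K) (n : ℕ) (hn : 1 ≤ n)
    (g : K[X]) (hg : g = (X - C γ) ^ 2 + C m + C γ)
    (hirr : Irreducible (gIter g n))
    (p₁ p₂ : K[X]) (hfac : gIter g (n + 1) = p₁ * p₂)
    (hd2 : 0 < p₂.degree)
    (α : AlgebraicClosure K) (hα : Polynomial.aeval α p₁ = 0) :
    Polynomial.aeval (2 * algebraMap K (AlgebraicClosure K) γ - α) p₁ ≠ 0 := by
  intro hα'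
  set α' := 2 * algebraMap K (AlgebraicClosure K) γ - α
  have hgm : g.Monic := by rw [hg]; monicity!
  have hg2 : g.natDegree = 2 := by rw [hg]; compute_degree!
  have hdeg : g.natDegree ≠ 0 := by omega
  have hsymm : aeval α' g = aeval α g := by
    simp only [α', hg, map_add, map_pow, map_sub, aeval_X, aeval_C]
    ring
  have hroot : aeval α (gIter g (n + 1)) = 0 := by rw [hfac, map_mul, hα, zero_mul]
  have hp₁ : p₁ ≠ 0 := left_ne_zero_of_mul (hfac ▸ (hgm.gIter hdeg _).ne_zero)
  obtain ⟨x₂, hx₂⟩ := IsAlgClosed.exists_aeval_eq_zero (AlgebraicClosure K) p₂ hd2.ne'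
  have hp₁_le : p₁.natDegree ≤ 2 ^ n := natDegree_le_of_gIter_succ_eq_mul hgm hg2 hirr hfac hx₂
  have hα_ge : 2 ^ n ≤ (minpoly K α).natDegree :=
    hg2 ▸ natDegree_pow_le_natDegree_minpoly hgm hdeg hirr hroot
  have hconj : aeval α' (minpoly K α) = 0 :=
    aeval_minpoly_eq_zero_of_natDegree_le hp₁ hα (hp₁_le.trans hα_ge) hα'
  have hfix : α' = α := by
    refine eq_of_aeval_minpoly_eq_zero_of_aeval_eq (Algebra.IsIntegral.isIntegral α) ?_ hconj hsymm
    rw [minpoly_aeval_eq_gIter hgm hdeg hirr hroot, natDegree_gIter, hg2]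
    exact (natDegree_le_of_dvd (minpoly.dvd K α hα) hp₁).trans hp₁_le
  have hαγ : α = algebraMap K _ γ := by linear_combination -hfix / 2
  rw [hαγ, minpoly.eq_X_sub_C, natDegree_X_sub_C] at hα_ge
  exact absurd hα_ge (Nat.one_lt_two_pow (by omega)).not_ge

theorem stmt_4 (K : Type*) [Field K] [NumberField K] (γ m : K) (n : ℕ) (hn : 1 ≤ n)
    (g : K[X]) (hg : g = (X - C γ) ^ 2 + C m + C γ)
    (hirr : Irreducible (gIter g n))
    (p₁ p₂ : K[X]) (hfac : gIter g (n + 1) = p₁ * p₂)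
    (hd1 : 0 < p₁.degree) (hd2 : 0 < p₂.degree)
    (α : AlgebraicClosure K) (hα : Polynomial.aeval α p₁ = 0) :
    Polynomial.aeval (2 * algebraMap K (AlgebraicClosure K) γ - α) p₁ ≠ 0 :=
  stmt_4_general K γ m n hn g hg hirr p₁ p₂ hfac hd2 α hα
end

section
/- Let K be a number field, γ, m ∈ K, g(x) = (x-γ)² + m + γ, and n ≥ 1. If gⁿ(x) is irreducible over K and g^{n+1}(x) = p₁(x)p₂(x) with p₁, p₂ ∈ K[x] nonconstant, then deg p₁ = deg p₂ = 2ⁿ and both p₁ and p₂ are irreducible over K. -/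
open Polynomial Module

lemma key_dvd {K : Type*} [Field K] (f g q : K[X]) (hf : Irreducible f)
    (hq : Irreducible q) (hdvd : q ∣ f.comp g) : f.natDegree ∣ q.natDegree := by
  haveI := Fact.mk hq
  set L := AdjoinRoot q
  haveI : FiniteDimensional K L := PowerBasis.finite (AdjoinRoot.powerBasis hq.ne_zero)
  set θ : L := AdjoinRoot.root q
  have h0 : (aeval θ) (f.comp g) = 0 := by
    obtain ⟨r, hr⟩ := hdvd
    rw [hr, map_mul, AdjoinRoot.aeval_eq, AdjoinRoot.mk_self, zero_mul]
  rw [aeval_comp] at h0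
  set α : L := aeval θ g
  have hint : IsIntegral K α := IsIntegral.of_finite K α
  have hmin : minpoly K α ∣ f := minpoly.dvd K α h0
  have hassoc : Associated (minpoly K α) f :=
    (minpoly.irreducible hint).associated_of_dvd hf hmin
  obtain ⟨u, hu⟩ := hassoc
  have hdeg : (minpoly K α).natDegree = f.natDegree := by
    rw [← hu, natDegree_mul (minpoly.ne_zero hint) u.isUnit.ne_zero,
      natDegree_eq_zero_of_isUnit u.isUnit, add_zero]
  have := minpoly.degree_dvd hint
  rw [hdeg] at this
  rwa [(AdjoinRoot.powerBasis hq.ne_zero).finrank, AdjoinRoot.powerBasis_dim] at this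

lemma gIter_comm {K : Type*} [Field K] (g : K[X]) (n : ℕ) :
    gIter g (n + 1) = (gIter g n).comp g := by
  induction n with
  | zero => simp [gIter]
  | succ k ih =>
    show g.comp (gIter g (k + 1)) = _
    rw [ih, ← comp_assoc, show g.comp (gIter g k) = gIter g (k + 1) from rfl, ih]

lemma assoc_irred {K : Type*} [Field K] (p q : K[X]) (hq : Irreducible q)
    (hdvd : q ∣ p) (hp : p ≠ 0) (hdeg : p.natDegree = q.natDegree) : Irreducible p := by
  obtain ⟨r, hr⟩ := hdvd
  have hq0 : q ≠ 0 := hq.ne_zero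
  have hr0 : r ≠ 0 := by rintro rfl; rw [mul_zero] at hr; exact hp hr
  have hnd : p.natDegree = q.natDegree + r.natDegree := by rw [hr, natDegree_mul hq0 hr0]
  have hr0' : r.natDegree = 0 := by omega
  have hru : IsUnit r := by
    rw [eq_C_of_natDegree_eq_zero hr0']
    refine isUnit_C.mpr (isUnit_iff_ne_zero.mpr ?_)
    intro h
    exact hr0 ((eq_C_of_natDegree_eq_zero hr0').trans (by rw [h, map_zero]))
  have ha : Associated q p := ⟨hru.unit, by rw [hru.unit_spec, ← hr]⟩
  exact ha.irreducible hq

theorem stmt_5 (K : Type*) [Field K] [NumberField K] (γ m : K) (n : ℕ) (hn : 1 ≤ n)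
    (g : K[X]) (hg : g = (X - C γ) ^ 2 + C m + C γ)
    (hirr : Irreducible (gIter g n))
    (p₁ p₂ : K[X]) (hfac : gIter g (n + 1) = p₁ * p₂)
    (hd1 : 0 < p₁.degree) (hd2 : 0 < p₂.degree) :
    p₁.natDegree = 2 ^ n ∧ p₂.natDegree = 2 ^ n ∧ Irreducible p₁ ∧ Irreducible p₂ := by
  have hgdeg : g.natDegree = 2 := by
    rw [hg]
    compute_degree!
  have hgne : g ≠ 0 := fun h => by simp [h] at hgdeg
  have hiterdeg : ∀ k, (gIter g k).natDegree = 2 ^ k := by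
    intro k
    induction k with
    | zero => simp [gIter]
    | succ j ih => show (g.comp (gIter g j)).natDegree = _;
                   rw [natDegree_comp, hgdeg, ih, pow_succ, mul_comm]
  set f := gIter g n with hf
  have hfd : f.natDegree = 2 ^ n := hiterdeg n
  have hcomp : gIter g (n+1) = f.comp g := gIter_comm g n
  have h1 : p₁ ≠ 0 := fun h => by simp [h] at hd1
  have h2 : p₂ ≠ 0 := fun h => by simp [h] at hd2
  have htot : p₁.natDegree + p₂.natDegree = 2 ^ (n+1) := by
    rw [← natDegree_mul h1 h2, ← hfac, hiterdeg]
  have hbound : ∀ p : K[X], 0 < p.degree → p ∣ p₁ * p₂ →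
      2 ^ n ≤ p.natDegree ∧ ∃ q, Irreducible q ∧ q ∣ p ∧ 2 ^ n ∣ q.natDegree := by
    intro p hdp hpm
    have hp0 : p ≠ 0 := fun h => by simp [h] at hdp
    have hpu : ¬IsUnit p := by
      intro hu
      have h0 := natDegree_eq_zero_of_isUnit hu
      rw [Polynomial.natDegree_eq_zero] at h0
      obtain ⟨c, rfl⟩ := h0
      exact absurd hdp (not_lt.mpr (le_trans degree_C_le (by norm_num)))
    obtain ⟨q, hqirr, hqdvd⟩ := WfDvdMonoid.exists_irreducible_factor hpu hp0
    have hqcomp : q ∣ f.comp g := by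
      rw [← hcomp, hfac]
      exact hqdvd.trans hpm
    have hdvd2 : 2 ^ n ∣ q.natDegree := hfd ▸ key_dvd f g q hirr hqirr hqcomp
    have hq1 : 1 ≤ q.natDegree := hqirr.natDegree_pos
    have hqge : 2 ^ n ≤ q.natDegree := Nat.le_of_dvd (by omega) hdvd2
    have hqle : q.natDegree ≤ p.natDegree := natDegree_le_of_dvd hqdvd hp0
    exact ⟨le_trans hqge hqle, q, hqirr, hqdvd, hdvd2⟩
  obtain ⟨hb1, q₁, hq₁i, hq₁d, hq₁m⟩ := hbound p₁ hd1 (Dvd.intro _ rfl)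
  obtain ⟨hb2, q₂, hq₂i, hq₂d, hq₂m⟩ := hbound p₂ hd2 (Dvd.intro_left _ rfl)
  have e1 : p₁.natDegree = 2 ^ n := by rw [pow_succ] at htot; omega
  have e2 : p₂.natDegree = 2 ^ n := by rw [pow_succ] at htot; omega
  have hq1deg : q₁.natDegree = 2 ^ n := by
    have := natDegree_le_of_dvd hq₁d h1
    have ha : 1 ≤ q₁.natDegree := hq₁i.natDegree_pos
    have := Nat.le_of_dvd (by omega) hq₁m
    omega
  have hq2deg : q₂.natDegree = 2 ^ n := by
    have := natDegree_le_of_dvd hq₂d h2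
    have ha : 1 ≤ q₂.natDegree := hq₂i.natDegree_pos
    have := Nat.le_of_dvd (by omega) hq₂m
    omega
  exact ⟨e1, e2, assoc_irred p₁ q₁ hq₁i hq₁d h1 (by omega),
    assoc_irred p₂ q₂ hq₂i hq₂d h2 (by omega)⟩
end

section
/- Let K be a field of characteristic 0, γ ≠ 1/4 in K, and m ∈ K. If g_{γ,m}(x) = (x-γ)² + m + γ is irreducible over K and g²_{γ,m}(x) is reducible over K, then there exists c₁ ∈ K \ {-1,1} with c₁⁴ + 4mc₁² - 4m - 4γ = 0, i.e., m = (c₁⁴ - 4γ)/(4 - 4c₁²). -/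
/-!
Translating by `γ` turns `g ∘ g` into the even quartic `Q = (X² + m)² + m + γ`, which has no root
in `K` because `g` has none. So a factorization of `g ∘ g` is a product of two monic quadratics, and
comparing coefficients of an even quartic leaves two shapes: `(X² + b)(X² + d)`, which would give
`g` a root, or `(X² + aX + b)(X² - aX + b)`, whose coefficient equations eliminate `b` to
`a⁴ + 4ma² - 4m - 4γ = 0`; `a = ±1` would force `γ = 1/4`.
-/

open Polynomial

namespace Polynomial

variable {R : Type*}

theorem Monic.eq_X_sq_add_C_mul_X_add_C [CommSemiring R] {p : R[X]} (hp : p.Monic)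
    (hdeg : p.natDegree = 2) : p = X ^ 2 + C (p.coeff 1) * X + C (p.coeff 0) := by
  have h2 : p.coeff 2 = 1 := hdeg ▸ hp.coeff_natDegree
  conv_lhs => rw [as_sum_range_C_mul_X_pow p, hdeg]
  simp only [Finset.sum_range_succ, Finset.sum_range_zero, h2, C_1]
  ring

theorem Monic.exists_quadratic_factors_of_not_irreducible [CommRing R] [IsDomain R] {p : R[X]}
    (hp : p.Monic) (hdeg : p.natDegree = 4) (hroots : ∀ x, ¬ p.IsRoot x)
    (hred : ¬ Irreducible p) :
    ∃ a b c d : R, p = (X ^ 2 + C a * X + C b) * (X ^ 2 + C c * X + C d) := by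
  have hp1 : p ≠ 1 := by rintro rfl; simp at hdeg
  simp only [hp.irreducible_iff_lt_natDegree_lt hp1, hdeg, not_forall, not_not] at hred
  obtain ⟨q, hq, hqdeg, r, rfl⟩ := hred
  have hr : r.Monic := hq.of_mul_monic_left hp
  have hqdeg2 : q.natDegree = 2 := by
    have hq1 : q.natDegree ≠ 1 := fun h1 => hroots (-q.coeff 0) <| by
      rw [IsRoot, eval_mul, hq.eq_X_add_C h1]
      simp
    simp only [Finset.mem_Ioc] at hqdeg
    omega
  have hrdeg : r.natDegree = 2 := by
    have := hq.natDegree_mul hr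
    omega
  exact ⟨q.coeff 1, q.coeff 0, r.coeff 1, r.coeff 0, by
    rw [← hq.eq_X_sq_add_C_mul_X_add_C hqdeg2, ← hr.eq_X_sq_add_C_mul_X_add_C hrdeg]⟩

theorem coeff_eqs_of_mul_eq_biquadratic [CommRing R] {a b c d s t : R}
    (h : (X ^ 2 + C a * X + C b) * (X ^ 2 + C c * X + C d) = X ^ 4 + C s * X ^ 2 + C t) :
    a + c = 0 ∧ b + d + a * c = s ∧ a * d + b * c = 0 ∧ b * d = t := by
  have hprod : (X ^ 2 + C a * X + C b) * (X ^ 2 + C c * X + C d) = X ^ 4 + C (a + c) * X ^ 3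
      + C (b + d + a * c) * X ^ 2 + C (a * d + b * c) * X + C (b * d) := by
    simp only [C_add, C_mul]
    ring
  rw [hprod] at h
  have hcoeff (n : ℕ) := congrArg (coeff · n) h
  have h3 := hcoeff 3
  have h2 := hcoeff 2
  have h1 := hcoeff 1
  have h0 := hcoeff 0
  simp only [coeff_add, coeff_C_mul, coeff_X_pow, coeff_X, coeff_C] at h3 h2 h1 h0
  norm_num at h3 h2 h1 h0
  exact ⟨h3, h2, h1, h0⟩

theorem eq_of_mul_eq_biquadratic [CommRing R] [IsDomain R] {a b c d s t : R}
    (h : (X ^ 2 + C a * X + C b) * (X ^ 2 + C c * X + C d) = X ^ 4 + C s * X ^ 2 + C t) :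
    (b + d = s ∧ b * d = t) ∨ (2 * b - a ^ 2 = s ∧ b ^ 2 = t) := by
  obtain ⟨h3, h2, h1, h0⟩ := coeff_eqs_of_mul_eq_biquadratic h
  obtain rfl : c = -a := by linear_combination h3
  rcases mul_eq_zero.mp (show a * (d - b) = 0 by linear_combination h1) with rfl | hdb
  · exact Or.inl ⟨by linear_combination h2, h0⟩
  · obtain rfl : d = b := by linear_combination hdb
    exact Or.inr ⟨by linear_combination h2, by linear_combination h0⟩

end Polynomial

theorem stmt_16 (K : Type*) [Field K] [CharZero K] (γ m : K) (hγ : γ ≠ 1 / 4)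
    (hirr : Irreducible ((X - C γ) ^ 2 + C m + C γ))
    (hred : ¬ Irreducible
      (((X - C γ) ^ 2 + C m + C γ).comp ((X - C γ) ^ 2 + C m + C γ))) :
    ∃ c₁ : K, c₁ ≠ -1 ∧ c₁ ≠ 1 ∧ c₁ ^ 4 + 4 * m * c₁ ^ 2 - 4 * m - 4 * γ = 0 ∧
      m = (c₁ ^ 4 - 4 * γ) / (4 - 4 * c₁ ^ 2) := by
  set g : K[X] := (X - C γ) ^ 2 + C m + C γ
  set Q : K[X] := X ^ 4 + C (2 * m) * X ^ 2 + C (m ^ 2 + m + γ)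
  have hg_deg : g.natDegree = 2 := by unfold g; compute_degree!
  have hg_roots (x : K) : ¬ g.IsRoot x := hirr.not_isRoot_of_natDegree_ne_one (by omega)
  have hQ_eval (x : K) : Q.eval x = g.eval (x ^ 2 + m + γ) := by
    simp only [Q, g, eval_add, eval_mul, eval_pow, eval_X, eval_C, eval_sub]
    ring
  have hQ_taylor : taylorEquiv γ (g.comp g) = Q := by
    change (g.comp g).comp (X + C γ) = Q
    simp only [g, Q, add_comp, sub_comp, pow_comp, X_comp, C_comp, C_add, C_mul,
      C_pow, map_ofNat]
    ring
  have hQ_red : ¬ Irreducible Q := by rwa [← hQ_taylor, MulEquiv.irreducible_iff]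
  obtain ⟨a, b, c, d, hfac⟩ := Monic.exists_quadratic_factors_of_not_irreducible
    (by unfold Q; monicity!) (by unfold Q; compute_degree!)
    (fun x hx => hg_roots _ ((hQ_eval x).symm.trans hx)) hQ_red
  rcases eq_of_mul_eq_biquadratic hfac.symm with ⟨hs, ht⟩ | ⟨hs, ht⟩
  · refine absurd ?_ (hg_roots (m + γ - b))
    simp only [g, IsRoot, eval_add, eval_sub, eval_pow, eval_X, eval_C]
    linear_combination b * hs - ht
  have ha : a ^ 4 + 4 * m * a ^ 2 - 4 * m - 4 * γ = 0 := by
    linear_combination 4 * ht - (a ^ 2 + 2 * m + 2 * b) * hs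
  have ha_sq : a ^ 2 ≠ 1 := fun h => hγ <| by
    linear_combination (-1 / 4) * ha + (a ^ 2 + 1 + 4 * m) / 4 * h
  refine ⟨a, fun h => ha_sq (by rw [h]; norm_num), fun h => ha_sq (by rw [h]; norm_num), ha, ?_⟩
  rw [eq_div_iff fun h => ha_sq (by linear_combination (-1 / 4) * h)]
  linear_combination -ha
end
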